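/- arXiv:1705.01380 — 2 statements merged into one kernel-verified Lean document; each statement's English description precedes it below -/
import Mathlib

section
/- Let p be an odd prime, w an integer with 1 ≤ w ≤ p−1, and β a primitive p²-th root of unity in the algebraic closure of F_2. If 2 ∈ D_{ℓ₀} for some ℓ₀ with 1 ≤ ℓ₀ ≤ p−1, then D_l(β^n) ≠ 0 for all l ∈ {0,...,p−1} and all integers n with gcd(n,p) = 1. -/
open Finset

noncomputable section

/-- The Fermat quotient `q_p(u)`: for `gcd(u,p)=1` the unique integer in `[0,p-1]`
congruent to `(u^(p-1)-1)/p` mod `p`, and `0` when `p ∣ u`. -/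
def fermatQuot (p u : ℕ) : ℕ :=
  if p ∣ u then 0 else ((u ^ (p - 1) - 1) / p) % p

/-- The polynomial quotient `q_{p,w}(u)`: the unique integer in `[0,p-1]`
congruent to `(u^w - u^(w*p))/p` mod `p`. -/
def polyQuot (p w u : ℕ) : ℤ :=
  (((u : ℤ) ^ w - (u : ℤ) ^ (w * p)) / (p : ℤ)) % (p : ℤ)

/-- The binary sequence `(f_u)`: `f_u = 0` iff the Legendre symbol of `q_{p,w}(u)`
is `1` or `q_{p,w}(u) = 0`. -/
def legSeq (p : ℕ) [Fact p.Prime] (w : ℕ) (u : ℕ) : ZMod 2 :=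
  if legendreSym p (polyQuot p w u) = 1 ∨ polyQuot p w u = 0 then 0 else 1

/-- The linear complexity of a binary sequence: the least order `L` of a linear
recurrence `s_{u+L} = c_{L-1} s_{u+L-1} + ⋯ + c_0 s_u` with `c_0 = 1` satisfied by `s`. -/
def linearComplexity (s : ℕ → ZMod 2) : ℕ :=
  sInf {L : ℕ | ∃ c : Fin L → ZMod 2,
    (∀ h : 0 < L, c ⟨0, h⟩ = 1) ∧
    ∀ u : ℕ, s (u + L) = ∑ i : Fin L, c i * s (u + (i : ℕ))}

/-- The map `H_w : u ↦ -w q_p(u) mod p` for `gcd(u,p)=1`, `0` if `p ∣ u` and `w ≥ 2`,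
and `k mod p` if `u ≡ kp (mod p²)` and `w = 1`. -/
def Hquot (p w u : ℕ) : ZMod p :=
  if p ∣ u then (if w = 1 then ((u / p : ℕ) : ZMod p) else 0)
  else -(w : ZMod p) * ((fermatQuot p u : ℕ) : ZMod p)

/-- `D_l = {u : 0 ≤ u < p², gcd(u,p) = 1, H_w(u) ≡ l (mod p)}`. -/
def Dset (p w : ℕ) (l : ZMod p) : Finset ℕ :=
  (Finset.range (p ^ 2)).filter fun u => Nat.Coprime u p ∧ Hquot p w u = l

/-- `Q_l = {u ∈ D_l : (u/p) = 1}`. -/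
def Qset (p : ℕ) [Fact p.Prime] (w : ℕ) (l : ZMod p) : Finset ℕ :=
  (Dset p w l).filter fun u => legendreSym p u = 1

/-- `N_l = {u ∈ D_l : (u/p) = -1}`. -/
def Nset (p : ℕ) [Fact p.Prime] (w : ℕ) (l : ZMod p) : Finset ℕ :=
  (Dset p w l).filter fun u => legendreSym p u = -1

/-- The quadratic residues modulo `p` in `{1,…,p-1}`. -/
def QRes (p : ℕ) [Fact p.Prime] : Finset ℕ :=
  (Finset.Ico 1 p).filter fun l => legendreSym p l = 1

/-- The quadratic non-residues modulo `p` in `{1,…,p-1}`. -/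
def QNR (p : ℕ) [Fact p.Prime] : Finset ℕ :=
  (Finset.Ico 1 p).filter fun l => legendreSym p l = -1

/-- Evaluation of `G^odd(x) = Σ_{l∈N} D_l(x) + Σ_{l=1}^{p-1} N_l(x)` at a point of the
algebraic closure of `F_2`. -/
def GoddEval (p : ℕ) [Fact p.Prime] (w : ℕ) (x : AlgebraicClosure (ZMod 2)) :
    AlgebraicClosure (ZMod 2) :=
  (∑ l ∈ QNR p, ∑ u ∈ Dset p w (l : ZMod p), x ^ u)
    + ∑ l ∈ Finset.Ico 1 p, ∑ u ∈ Nset p w (l : ZMod p), x ^ u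

/-- Evaluation of `G^one(x) = Σ_{l∈N} D_l(x) + Σ_{l=1}^{p-1} N_l(x) + Σ_{l∈N} x^{lp}`. -/
def GoneEval (p : ℕ) [Fact p.Prime] (w : ℕ) (x : AlgebraicClosure (ZMod 2)) :
    AlgebraicClosure (ZMod 2) :=
  GoddEval p w x + ∑ l ∈ QNR p, x ^ (l * p)

/-!
Multiplication by `m` prime to `p` permutes the units modulo `p²` and, `H_w` being a homomorphism
on them, adds `H_w(m)` to the index: `D_l(ζ^m) = D_{l + H_w(m)}(ζ)` whenever `ζ^{p²} = 1`.
In characteristic `2` this gives `D_l(ζ)² = D_{l + ℓ₀}(ζ)`, and `ℓ₀ ≠ 0` generates `ℤ/p`, so a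
single vanishing `D_l(ζ)` forces `D_l(ζ^k) = 0` for all `l` and all `k` prime to `p`. When `p ∣ k`,
`ζ^k` is a `p`-th root of unity, fixed by the multipliers `1 + tp`, whose `H_w`-values `wt` exhaust
`ℤ/p`; so `D_l(ζ^k)` does not depend on `l`. Hence `D_0(x)` and `D_{ℓ₀}(x)`, of degree `< p²`,
agree at all `p²` powers of `ζ` and are equal, although `1 ∈ D_0 \ D_{ℓ₀}`.
-/

open Polynomial in
theorem IsPrimitiveRoot.eq_of_forall_sum_pow_eq {F : Type*} [Field F] {ζ : F} {n : ℕ}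
    (hζ : IsPrimitiveRoot ζ n) {S T : Finset ℕ} (hS : S ⊆ range n) (hT : T ⊆ range n)
    (h : ∀ k < n, ∑ u ∈ S, (ζ ^ k) ^ u = ∑ u ∈ T, (ζ ^ k) ^ u) : S = T := by
  obtain rfl | hn := n.eq_zero_or_pos
  · simp_all
  have hdeg : ∀ U ⊆ range n, (∑ u ∈ U, (X : F[X]) ^ u).natDegree < n := by
    intro U hU
    refine Nat.lt_of_le_pred hn (natDegree_sum_le_of_forall_le _ _ fun u hu => ?_)
    exact (natDegree_X_pow_le u).trans (Nat.le_pred_of_lt (mem_range.1 (hU hu)))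
  have hST : ∑ u ∈ S, (X : F[X]) ^ u = ∑ u ∈ T, X ^ u := by
    refine eq_of_natDegree_lt_card_of_eval_eq _ _ (f := fun k : Fin n => ζ ^ (k : ℕ))
      (fun i j hij => Fin.ext (hζ.pow_inj i.2 j.2 hij)) (fun k => ?_) ?_
    · simpa [eval_finsetSum] using h k k.2
    · simpa using ⟨hdeg S hS, hdeg T hT⟩
  ext u
  have hcoeff := congrArg (coeff · u) hST
  simp only [finsetSum_coeff, coeff_X_pow, sum_ite_eq] at hcoeff
  split_ifs at hcoeff <;> simp_all

theorem ZMod.natCast_eq_of_mul_eq_mul {p : ℕ} [NeZero p] {a b : ℕ}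
    (h : (p : ZMod (p ^ 2)) * a = p * b) : (a : ZMod p) = b := by
  rw [ZMod.natCast_eq_natCast_iff]
  refine Nat.ModEq.mul_left_cancel' (NeZero.ne p) ?_
  rw [← sq, ← ZMod.natCast_eq_natCast_iff]
  exact_mod_cast h

theorem ZMod.natCast_sq_eq_zero (n : ℕ) : (n : ZMod (n ^ 2)) ^ 2 = 0 := by
  exact_mod_cast ZMod.natCast_self (n ^ 2)

section FermatQuotient

variable {p : ℕ} [hp : Fact p.Prime]

theorem natCast_pow_sub_one_eq_one_add_mul_fermatQuot {u : ℕ} (hu : ¬ p ∣ u) :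
    (u : ZMod (p ^ 2)) ^ (p - 1) = 1 + p * fermatQuot p u := by
  have hcop : u.Coprime p := ((Nat.Prime.coprime_iff_not_dvd hp.out).2 hu).symm
  set K := u ^ (p - 1) - 1
  have hK : u ^ (p - 1) = 1 + p * (K / p) := by
    have h1 : 1 ≤ u ^ (p - 1) :=
      Nat.one_le_pow _ _ (Nat.pos_of_ne_zero (by rintro rfl; exact hu (dvd_zero p)))
    have h2 : p * (K / p) = K := Nat.mul_div_cancel' (Nat.dvd_of_mod_eq_zero
      (Nat.pow_card_sub_one_sub_one_mod_card hp.out hcop))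
    omega
  have hmod : u ^ (p - 1) ≡ 1 + p * fermatQuot p u [MOD p ^ 2] := by
    rw [hK, fermatQuot, if_neg hu, sq]
    exact ((Nat.mod_modEq _ p).symm.mul_left' p).add_left 1
  exact_mod_cast (ZMod.natCast_eq_natCast_iff _ _ _).2 hmod

theorem not_dvd_mul_mod_sq {u v : ℕ} (hu : ¬ p ∣ u) (hv : ¬ p ∣ v) : ¬ p ∣ u * v % p ^ 2 := by
  rw [Nat.dvd_mod_iff (dvd_pow_self p two_ne_zero)]
  exact hp.out.not_dvd_mul hu hv

theorem natCast_fermatQuot_mul_mod {u v : ℕ} (hu : ¬ p ∣ u) (hv : ¬ p ∣ v) :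
    (fermatQuot p (u * v % p ^ 2) : ZMod p) = fermatQuot p u + fermatQuot p v := by
  have h := natCast_pow_sub_one_eq_one_add_mul_fermatQuot (not_dvd_mul_mod_sq hu hv)
  rw [ZMod.natCast_mod, Nat.cast_mul, mul_pow, natCast_pow_sub_one_eq_one_add_mul_fermatQuot hu,
    natCast_pow_sub_one_eq_one_add_mul_fermatQuot hv] at h
  exact_mod_cast ZMod.natCast_eq_of_mul_eq_mul (p := p) (by
    push_cast
    linear_combination
      -h + (fermatQuot p u * fermatQuot p v : ZMod (p ^ 2)) * ZMod.natCast_sq_eq_zero p)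

theorem not_dvd_one_add_mul (t : ℕ) : ¬ p ∣ 1 + t * p := by
  rw [Nat.dvd_add_left (dvd_mul_left p t)]
  exact hp.out.not_dvd_one

open Polynomial in
theorem natCast_fermatQuot_one_add_mul (t : ℕ) : (fermatQuot p (1 + t * p) : ZMod p) = -t := by
  have h := natCast_pow_sub_one_eq_one_add_mul_fermatQuot (not_dvd_one_add_mul (p := p) t)
  have hsq : ((t * p : ℕ) : ZMod (p ^ 2)) ^ 2 = 0 := by
    rw [Nat.cast_mul, mul_pow, ZMod.natCast_sq_eq_zero p, mul_zero]
  have hbinom := eval_add_of_sq_eq_zero (X ^ (p - 1)) 1 _ hsq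
  push_cast at h hbinom
  simp only [one_pow, derivative_X_pow, eval_mul, eval_C, eval_pow, eval_X, mul_one] at hbinom
  have hc : (fermatQuot p (1 + t * p) : ZMod p) = ((((p - 1) * t : ℕ) : ZMod p)) :=
    ZMod.natCast_eq_of_mul_eq_mul (by push_cast; linear_combination hbinom - h)
  rw [hc, Nat.cast_mul, Nat.cast_pred hp.out.pos, ZMod.natCast_self]
  ring

theorem Hquot_of_not_dvd (w : ℕ) {u : ℕ} (hu : ¬ p ∣ u) :
    Hquot p w u = -(w : ZMod p) * fermatQuot p u :=
  if_neg hu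

theorem Hquot_mul_mod (w : ℕ) {u v : ℕ} (hu : ¬ p ∣ u) (hv : ¬ p ∣ v) :
    Hquot p w (u * v % p ^ 2) = Hquot p w u + Hquot p w v := by
  rw [Hquot_of_not_dvd w hu, Hquot_of_not_dvd w hv, Hquot_of_not_dvd w (not_dvd_mul_mod_sq hu hv),
    natCast_fermatQuot_mul_mod hu hv]
  ring

theorem Hquot_one_add_mul (w t : ℕ) : Hquot p w (1 + t * p) = w * t := by
  rw [Hquot_of_not_dvd w (not_dvd_one_add_mul t), natCast_fermatQuot_one_add_mul]
  ring

theorem Hquot_one (w : ℕ) : Hquot p w 1 = 0 := by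
  simpa using Hquot_one_add_mul (p := p) w 0

end FermatQuotient

section Dset

variable {p : ℕ} [hp : Fact p.Prime]

theorem mem_Dset {w u : ℕ} {l : ZMod p} :
    u ∈ Dset p w l ↔ u < p ^ 2 ∧ ¬ p ∣ u ∧ Hquot p w u = l := by
  rw [Dset, mem_filter, mem_range, Nat.coprime_comm, hp.out.coprime_iff_not_dvd]

theorem mul_mod_mem_Dset {w a u : ℕ} {l : ZMod p} (ha : ¬ p ∣ a) (hu : u ∈ Dset p w l) :
    a * u % p ^ 2 ∈ Dset p w (l + Hquot p w a) := by
  obtain ⟨-, hpu, rfl⟩ := mem_Dset.1 hu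
  exact mem_Dset.2 ⟨Nat.mod_lt _ (pow_pos hp.out.pos 2), not_dvd_mul_mod_sq ha hpu,
    by rw [Hquot_mul_mod w ha hpu, add_comm]⟩

theorem sum_Dset_pow_mul {R : Type*} [Semiring R] {ζ : R} (hζ : ζ ^ p ^ 2 = 1) (w : ℕ) {m : ℕ}
    (hm : ¬ p ∣ m) (l : ZMod p) :
    ∑ u ∈ Dset p w l, (ζ ^ m) ^ u = ∑ v ∈ Dset p w (l + Hquot p w m), ζ ^ v := by
  obtain ⟨m', -, hmm'⟩ := Nat.exists_mul_mod_eq_one_of_coprime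
    (((Nat.Prime.coprime_iff_not_dvd hp.out).2 hm).symm.pow_right 2)
    (Nat.one_lt_pow two_ne_zero hp.out.one_lt)
  have hm' : ¬ p ∣ m' := fun h => hp.out.not_dvd_one
    (hmm' ▸ (Nat.dvd_mod_iff (dvd_pow_self p two_ne_zero)).2 (h.mul_left m))
  have hHm' : Hquot p w m' = -Hquot p w m := by
    have := Hquot_mul_mod w hm hm'
    rw [hmm', Hquot_one] at this
    linear_combination -this
  have hcancel : ∀ a b u, u < p ^ 2 → a * b % p ^ 2 = 1 → a * (b * u % p ^ 2) % p ^ 2 = u := by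
    intro a b u hu hab
    rw [Nat.mul_mod_mod, ← mul_assoc, ← Nat.mod_mul_mod, hab, one_mul, Nat.mod_eq_of_lt hu]
  refine sum_nbij' (fun u => m * u % p ^ 2) (fun v => m' * v % p ^ 2)
    (fun u hu => mul_mod_mem_Dset hm hu) (fun v hv => ?_)
    (fun u hu => hcancel _ _ _ (mem_Dset.1 hu).1 (by rwa [mul_comm]))
    (fun v hv => hcancel _ _ _ (mem_Dset.1 hv).1 hmm') (fun u _ => ?_)
  · simpa [hHm'] using mul_mod_mem_Dset hm' hv
  · rw [← pow_mul, pow_eq_pow_mod (m * u) hζ]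

theorem sum_Dset_pow_sq {R : Type*} [CommRing R] [CharP R 2] {ζ : R} (hζ : ζ ^ p ^ 2 = 1)
    {w : ℕ} {ℓ₀ : ZMod p} (h2 : 2 ∈ Dset p w ℓ₀) (l : ZMod p) :
    (∑ u ∈ Dset p w l, ζ ^ u) ^ 2 = ∑ u ∈ Dset p w (l + ℓ₀), ζ ^ u := by
  obtain ⟨-, h2p, rfl⟩ := mem_Dset.1 h2
  rw [sum_pow_char, ← sum_Dset_pow_mul hζ w h2p l]
  simp_rw [← pow_mul, mul_comm]

theorem sum_Dset_pow_eq_zero_of_eq_zero {R : Type*} [CommRing R] [CharP R 2] {ζ : R}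
    (hζ : ζ ^ p ^ 2 = 1) {w : ℕ} {ℓ₀ : ZMod p} (h2 : 2 ∈ Dset p w ℓ₀) (hℓ₀ : ℓ₀ ≠ 0) {l : ZMod p}
    (h : ∑ u ∈ Dset p w l, ζ ^ u = 0) (l' : ZMod p) : ∑ u ∈ Dset p w l', ζ ^ u = 0 := by
  have hk : ∀ k : ℕ, ∑ u ∈ Dset p w (l + k * ℓ₀), ζ ^ u = 0 := by
    intro k
    induction k with
    | zero => simpa using h
    | succ k ih =>
      rw [Nat.cast_succ, add_one_mul, ← add_assoc, ← sum_Dset_pow_sq hζ h2, ih, sq, zero_mul]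
  simpa [div_mul_cancel₀ _ hℓ₀] using hk ((l' - l) / ℓ₀).val

theorem sum_Dset_pow_eq_of_pow_eq_one {R : Type*} [Semiring R] {ξ : R} (hξ : ξ ^ p = 1) {w : ℕ}
    (hw : (w : ZMod p) ≠ 0) (l l' : ZMod p) :
    ∑ u ∈ Dset p w l, ξ ^ u = ∑ u ∈ Dset p w l', ξ ^ u := by
  set t := ((w : ZMod p)⁻¹ * (l' - l)).val
  have hξt : ξ ^ (1 + t * p) = ξ := by rw [pow_add, pow_mul', hξ, one_pow, mul_one, pow_one]
  calc ∑ u ∈ Dset p w l, ξ ^ u = ∑ u ∈ Dset p w l, (ξ ^ (1 + t * p)) ^ u := by rw [hξt]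
    _ = ∑ u ∈ Dset p w (l + Hquot p w (1 + t * p)), ξ ^ u :=
      sum_Dset_pow_mul (by rw [sq, pow_mul, hξ, one_pow]) w (not_dvd_one_add_mul t) l
    _ = ∑ u ∈ Dset p w l', ξ ^ u := by
      rw [Hquot_one_add_mul, ZMod.natCast_zmod_val, mul_inv_cancel_left₀ hw, add_sub_cancel]

theorem sum_Dset_pow_ne_zero {F : Type*} [Field F] [CharP F 2] {ζ : F}
    (hζ : IsPrimitiveRoot ζ (p ^ 2)) {w : ℕ} {ℓ₀ : ZMod p} (h2 : 2 ∈ Dset p w ℓ₀) (hℓ₀ : ℓ₀ ≠ 0)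
    (l : ZMod p) : ∑ u ∈ Dset p w l, ζ ^ u ≠ 0 := by
  intro h
  obtain ⟨-, h2p, hH2⟩ := mem_Dset.1 h2
  have hw : (w : ZMod p) ≠ 0 := fun hw => hℓ₀ (by rw [← hH2, Hquot_of_not_dvd w h2p, hw]; ring)
  have hvanish : ∀ k, ¬ p ∣ k → ∀ l', ∑ u ∈ Dset p w l', (ζ ^ k) ^ u = 0 := fun k hk l' => by
    rw [sum_Dset_pow_mul hζ.pow_eq_one w hk]
    exact sum_Dset_pow_eq_zero_of_eq_zero hζ.pow_eq_one h2 hℓ₀ h _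
  have hD : Dset p w 0 = Dset p w ℓ₀ :=
    hζ.eq_of_forall_sum_pow_eq (filter_subset _ _) (filter_subset _ _) fun k _ => by
      by_cases hk : p ∣ k
      · obtain ⟨j, rfl⟩ := hk
        refine sum_Dset_pow_eq_of_pow_eq_one ?_ hw 0 ℓ₀
        rw [← pow_mul, show p * j * p = p ^ 2 * j by ring, pow_mul, hζ.pow_eq_one, one_pow]
      · rw [hvanish k hk, hvanish k hk]
  have h1 : 1 ∈ Dset p w ℓ₀ := hD ▸ mem_Dset.2
    ⟨Nat.one_lt_pow two_ne_zero hp.out.one_lt, hp.out.not_dvd_one, Hquot_one w⟩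
  exact hℓ₀ (by rw [← (mem_Dset.1 h1).2.2, Hquot_one])

end Dset

theorem Dset_eval_ne_zero_general (p : ℕ) [hp : Fact p.Prime] (w : ℕ)
    (β : AlgebraicClosure (ZMod 2)) (hβ : IsPrimitiveRoot β (p ^ 2))
    (ℓ₀ : ℕ) (hℓ₀1 : 1 ≤ ℓ₀) (hℓ₀2 : ℓ₀ ≤ p - 1) (h2 : 2 ∈ Dset p w (ℓ₀ : ZMod p)) :
    ∀ l : ℕ, l ≤ p - 1 → ∀ n : ℤ, Int.gcd n p = 1 →
      ∑ u ∈ Dset p w (l : ZMod p), (β ^ n) ^ u ≠ 0 := by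
  intro l _ n hn
  have hℓ₀ : (ℓ₀ : ZMod p) ≠ 0 := by
    rw [Ne, ZMod.natCast_eq_zero_iff]
    exact Nat.not_dvd_of_pos_of_lt hℓ₀1 (by omega)
  have hn2 : n.gcd (p ^ 2 : ℕ) = 1 := by
    rw [← Int.isCoprime_iff_gcd_eq_one] at hn ⊢
    exact_mod_cast hn.pow_right
  exact sum_Dset_pow_ne_zero (hβ.zpow_of_gcd_eq_one n hn2) h2 hℓ₀ l

/-- Lemma: if `2 ∈ D_{ℓ₀}` with `1 ≤ ℓ₀ ≤ p-1`, then `D_l(β^n) ≠ 0` for all `l` and all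
integers `n` coprime to `p`. -/
theorem Dset_eval_ne_zero (p : ℕ) [hp : Fact p.Prime] (hodd : p ≠ 2)
    (w : ℕ) (hw1 : 1 ≤ w) (hw2 : w ≤ p - 1)
    (β : AlgebraicClosure (ZMod 2)) (hβ : IsPrimitiveRoot β (p ^ 2))
    (ℓ₀ : ℕ) (hℓ₀1 : 1 ≤ ℓ₀) (hℓ₀2 : ℓ₀ ≤ p - 1) (h2 : 2 ∈ Dset p w (ℓ₀ : ZMod p)) :
    ∀ l : ℕ, l ≤ p - 1 → ∀ n : ℤ, Int.gcd n p = 1 →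
      ∑ u ∈ Dset p w (l : ZMod p), (β ^ n) ^ u ≠ 0 :=
  Dset_eval_ne_zero_general p (hp := hp) w β hβ ℓ₀ hℓ₀1 hℓ₀2 h2
end
end

section
/- Let p be an odd prime, w an integer with 1 ≤ w ≤ p−1, and β a primitive p²-th root of unity in the algebraic closure of F_2. Then G^one(β^0) equals the image of the integer (p−1)/2 in F_2, and G^one(β^{kp}) = 0 for every k = 1, ..., p−1. -/
open Finset

noncomputable section

/-!
Write `u = r + t p` with `p ∤ r`. Expanding `(r + t p)^(p-1)` to second order gives
`q_p(r + t p) ≡ q_p(r) - t / r (mod p)`, so `t ↦ H_w(r + t p)` is affine with nonzero slope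
`w / r`. Hence `u ↦ u mod p` is a bijection from each `D_l` onto `{1, …, p-1}`, and it carries
`N_l` onto the non-residues. For `x^p = 1` this gives `D_l(x) = Σ_{r=1}^{p-1} x^r` and
`N_l(x) = Σ_{r ∈ N} x^r`, hence `G^one(x) = |N| (Σ_{r=1}^{p-1} x^r + 1) + (p-1) Σ_{r ∈ N} x^r`.
Over `F_2` the last term vanishes because `p - 1` is even. At `x = 1` what remains is
`|N| = (p-1)/2`; at a primitive `p`-th root of unity `Σ_{r=1}^{p-1} x^r = -1`, so everything
cancels.
-/

section

variable {p w : ℕ}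

theorem mem_Dset_iff {l : ZMod p} {u : ℕ} :
    u ∈ Dset p w l ↔ u < p ^ 2 ∧ Nat.Coprime u p ∧ Hquot p w u = l := by
  rw [Dset, mem_filter, mem_range]

variable [hp : Fact p.Prime]

theorem natCast_fermatQuot_eq_of_pow_eq {u : ℕ} (hu : Nat.Coprime u p) {m : ℤ}
    (h : (u : ℤ) ^ (p - 1) = 1 + p * m) : (fermatQuot p u : ZMod p) = m := by
  have hu0 : 0 < u := Nat.pos_of_ne_zero fun hu0 =>
    hp.out.one_lt.ne' ((Nat.coprime_zero_left p).mp (hu0 ▸ hu))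
  have hquot : (((u ^ (p - 1) - 1) / p : ℕ) : ℤ) = m := by
    push_cast [Nat.cast_sub (Nat.one_le_pow _ _ hu0), h]
    simp [hp.out.ne_zero]
  rw [fermatQuot, if_neg (hp.out.coprime_iff_not_dvd.mp hu.symm), ZMod.natCast_mod,
    ← Int.cast_natCast, hquot]

theorem natCast_fermatQuot_add_mul {r : ℕ} (hr : Nat.Coprime r p) (t : ℕ) :
    (fermatQuot p (r + t * p) : ZMod p) = fermatQuot p r - (r : ZMod p)⁻¹ * t := by
  obtain ⟨m, hm⟩ := Int.prime_dvd_pow_sub_one hp.out (Nat.isCoprime_iff_coprime.mpr hr)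
  obtain ⟨c, hc⟩ := sq_dvd_add_pow_sub_sub ((t : ℤ) * p) r (p - 1)
  have hp1 : ((p - 1 : ℕ) : ℤ) = p - 1 := by push_cast [hp.out.one_le]; ring
  have hexp : ((r + t * p : ℕ) : ℤ) ^ (p - 1)
      = 1 + p * (m + r ^ (p - 1 - 1) * t * (p - 1) + p * t ^ 2 * c) := by
    push_cast
    rw [hp1] at hc
    linear_combination hc + hm
  have hr0 : (r : ZMod p) ≠ 0 := by
    rw [Ne, ZMod.natCast_eq_zero_iff]
    exact hp.out.coprime_iff_not_dvd.mp hr.symm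
  have hinv : (r : ZMod p) ^ (p - 1 - 1) = (r : ZMod p)⁻¹ := by
    refine eq_inv_of_mul_eq_one_left ?_
    rw [← pow_succ, Nat.sub_add_cancel (Nat.le_sub_one_of_lt hp.out.one_lt),
      ZMod.pow_card_sub_one_eq_one hr0]
  rw [natCast_fermatQuot_eq_of_pow_eq ((Nat.coprime_add_mul_right_left _ _ _).mpr hr) hexp,
    natCast_fermatQuot_eq_of_pow_eq hr (m := m) (by linear_combination hm)]
  push_cast
  rw [hinv, ZMod.natCast_self]
  ring

theorem Hquot_add_mul {r : ℕ} (hr : Nat.Coprime r p) (t : ℕ) :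
    Hquot p w (r + t * p) = Hquot p w r + w * (r : ZMod p)⁻¹ * t := by
  have hrt : Nat.Coprime (r + t * p) p := (Nat.coprime_add_mul_right_left _ _ _).mpr hr
  rw [Hquot, Hquot, if_neg (hp.out.coprime_iff_not_dvd.mp hrt.symm),
    if_neg (hp.out.coprime_iff_not_dvd.mp hr.symm), natCast_fermatQuot_add_mul hr]
  ring

theorem mod_mem_Ico_of_mem_Dset {l : ZMod p} {u : ℕ} (hu : u ∈ Dset p w l) :
    u % p ∈ Ico 1 p := by
  have hpu : ¬ p ∣ u := hp.out.coprime_iff_not_dvd.mp (mem_Dset_iff.mp hu).2.1.symm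
  exact mem_Ico.mpr ⟨Nat.pos_of_ne_zero fun h => hpu (Nat.dvd_of_mod_eq_zero h),
    Nat.mod_lt _ hp.out.pos⟩

theorem Dset_injOn_mod (hw : (w : ZMod p) ≠ 0) (l : ZMod p) :
    Set.InjOn (· % p) (Dset p w l) := by
  intro u₁ hu₁ u₂ hu₂ (h : u₁ % p = u₂ % p)
  obtain ⟨hu₁p, hcop, rfl⟩ := mem_Dset_iff.mp hu₁
  obtain ⟨hu₂p, -, hH⟩ := mem_Dset_iff.mp hu₂
  have hr : Nat.Coprime (u₁ % p) p := (ZMod.coprime_mod_iff_coprime u₁ p).mpr hcop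
  have hr0 : ((u₁ % p : ℕ) : ZMod p) ≠ 0 := by
    rw [Ne, ZMod.natCast_eq_zero_iff]
    exact hp.out.coprime_iff_not_dvd.mp hr.symm
  rw [← Nat.mod_add_div' u₁ p, ← Nat.mod_add_div' u₂ p, ← h, Hquot_add_mul hr, Hquot_add_mul hr,
    add_right_inj, mul_right_inj' (mul_ne_zero hw (inv_ne_zero hr0)),
    ZMod.natCast_eq_natCast_iff', Nat.mod_eq_of_lt, Nat.mod_eq_of_lt] at hH
  · rw [← Nat.mod_add_div' u₁ p, ← Nat.mod_add_div' u₂ p, h, hH]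
  all_goals exact Nat.div_lt_of_lt_mul (by rwa [← sq])

theorem Dset_surjOn_mod (hw : (w : ZMod p) ≠ 0) (l : ZMod p) :
    Set.SurjOn (· % p) (Dset p w l) (Ico 1 p) := by
  intro r hr
  obtain ⟨hr1, hrp⟩ := mem_Ico.mp (mem_coe.mp hr)
  have hcop : Nat.Coprime r p := (Nat.coprime_of_lt_prime (by omega) hrp hp.out).symm
  have hslope : (w : ZMod p) * (r : ZMod p)⁻¹ ≠ 0 := by
    refine mul_ne_zero hw (inv_ne_zero ?_)
    rw [Ne, ZMod.natCast_eq_zero_iff]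
    exact hp.out.coprime_iff_not_dvd.mp hcop.symm
  set t := ((l - Hquot p w r) / (w * (r : ZMod p)⁻¹)).val
  have ht : t < p := ZMod.val_lt _
  refine ⟨r + t * p, mem_Dset_iff.mpr ⟨?_, (Nat.coprime_add_mul_right_left _ _ _).mpr hcop, ?_⟩, ?_⟩
  · nlinarith
  · rw [Hquot_add_mul hcop, ZMod.natCast_zmod_val, mul_div_cancel₀ _ hslope, add_sub_cancel]
  · simp [Nat.mod_eq_of_lt hrp]

theorem sum_Dset_comp_mod {M : Type*} [AddCommMonoid M] (hw : (w : ZMod p) ≠ 0) (l : ZMod p)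
    (f : ℕ → M) : ∑ u ∈ Dset p w l, f (u % p) = ∑ r ∈ Ico 1 p, f r :=
  sum_nbij (· % p) (fun _ => mod_mem_Ico_of_mem_Dset) (Dset_injOn_mod hw l)
    (Dset_surjOn_mod hw l) fun _ _ => rfl

theorem sum_Dset_pow {R : Type*} [Semiring R] (hw : (w : ZMod p) ≠ 0) (l : ZMod p) {x : R}
    (hx : x ^ p = 1) : ∑ u ∈ Dset p w l, x ^ u = ∑ r ∈ Ico 1 p, x ^ r := by
  rw [← sum_Dset_comp_mod hw l (x ^ ·)]
  exact sum_congr rfl fun u _ => pow_eq_pow_mod u hx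

theorem sum_Nset_pow {R : Type*} [Semiring R] (hw : (w : ZMod p) ≠ 0) (l : ZMod p) {x : R}
    (hx : x ^ p = 1) : ∑ u ∈ Nset p w l, x ^ u = ∑ r ∈ QNR p, x ^ r := by
  rw [Nset, QNR, sum_filter, sum_filter,
    ← sum_Dset_comp_mod hw l fun r => if legendreSym p r = -1 then x ^ r else 0]
  refine sum_congr rfl fun u _ => ?_
  rw [Int.natCast_mod, ← legendreSym.mod, ← pow_eq_pow_mod u hx]

theorem sum_range_legendreSym (hp2 : p ≠ 2) : ∑ r ∈ range p, legendreSym p r = 0 := by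
  rw [← quadraticChar_sum_zero (F := ZMod p) (by rwa [ZMod.ringChar_zmod_n])]
  refine sum_nbij' (Nat.cast : ℕ → ZMod p) ZMod.val (fun _ _ => mem_univ _)
    (fun a _ => mem_range.mpr (ZMod.val_lt a)) (fun r hr => ZMod.val_cast_of_lt (mem_range.mp hr))
    (fun a _ => ZMod.natCast_zmod_val a) fun r _ => ?_
  rw [legendreSym, Int.cast_natCast]

theorem two_mul_card_QNR (hp2 : p ≠ 2) : 2 * #(QNR p) = p - 1 := by
  have hsplit : ∀ r ∈ Ico 1 p,
      legendreSym p r = 1 - 2 * if legendreSym p r = -1 then 1 else 0 := by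
    intro r hr
    obtain ⟨hr1, hrp⟩ := mem_Ico.mp hr
    have hr0 : ((r : ℤ) : ZMod p) ≠ 0 := by
      rw [Int.cast_natCast, Ne, ZMod.natCast_eq_zero_iff]
      exact fun h => (Nat.le_of_dvd hr1 h).not_gt hrp
    rcases legendreSym.eq_one_or_neg_one p hr0 with h | h <;> simp [h]
  have hsum : ∑ r ∈ Ico 1 p, legendreSym p r = 0 := by
    rw [← sum_range_legendreSym hp2, range_eq_Ico, sum_eq_sum_Ico_succ_bot hp.out.pos,
      Nat.cast_zero, legendreSym.at_zero, zero_add]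
  rw [sum_congr rfl hsplit, sum_sub_distrib, ← mul_sum, sum_boole, sum_const, Nat.card_Ico,
    nsmul_one] at hsum
  have : p - 1 = 2 * #(QNR p) := by exact_mod_cast sub_eq_zero.mp hsum
  omega

theorem GoneEval_of_pow_eq_one (hw : (w : ZMod p) ≠ 0) {x : AlgebraicClosure (ZMod 2)}
    (hx : x ^ p = 1) :
    GoneEval p w x
      = #(QNR p) * (∑ r ∈ Ico 1 p, x ^ r + 1) + (p - 1 : ℕ) * ∑ r ∈ QNR p, x ^ r := by
  have hxlp : ∀ l : ℕ, x ^ (l * p) = 1 := fun l => by rw [pow_mul', hx, one_pow]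
  simp only [GoneEval, GoddEval, sum_Dset_pow hw _ hx, sum_Nset_pow hw _ hx, hxlp, sum_const,
    Nat.card_Ico, nsmul_eq_mul, mul_one]
  ring

theorem natCast_pred_eq_zero (hp2 : p ≠ 2) : ((p - 1 : ℕ) : AlgebraicClosure (ZMod 2)) = 0 := by
  rw [CharP.cast_eq_zero_iff (AlgebraicClosure (ZMod 2)) 2, ← even_iff_two_dvd]
  exact Nat.Odd.sub_odd (hp.out.odd_of_ne_two hp2) odd_one

end

/-- Lemma: values of `G^one` at `β^(kp)` for a primitive `p²`-th root of unity `β`. -/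
theorem GoneEval_at_pow_kp (p : ℕ) [hp : Fact p.Prime] (hodd : p ≠ 2)
    (w : ℕ) (hw1 : 1 ≤ w) (hw2 : w ≤ p - 1)
    (β : AlgebraicClosure (ZMod 2)) (hβ : IsPrimitiveRoot β (p ^ 2)) :
    GoneEval p w (β ^ 0) = (((p - 1) / 2 : ℕ) : AlgebraicClosure (ZMod 2)) ∧
    ∀ k : ℕ, 1 ≤ k → k ≤ p - 1 → GoneEval p w (β ^ (k * p)) = 0 := by
  have hw : (w : ZMod p) ≠ 0 := by
    rw [Ne, ZMod.natCast_eq_zero_iff]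
    exact fun h => (Nat.le_of_dvd hw1 h).not_gt (by omega)
  have hcard : #(QNR p) = (p - 1) / 2 := by have := two_mul_card_QNR hodd; omega
  constructor
  · simp [GoneEval_of_pow_eq_one hw (one_pow p), natCast_pred_eq_zero hodd, hcard]
  · intro k hk1 hkp
    have hζ : IsPrimitiveRoot (β ^ (k * p)) p := by
      rw [mul_comm, pow_mul]
      exact (hβ.pow (pow_pos hp.out.pos 2) (sq p)).pow_of_coprime k
        (Nat.coprime_of_lt_prime (by omega) (by omega) hp.out).symm
    have hS : ∑ r ∈ Ico 1 p, (β ^ (k * p)) ^ r = -1 := by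
      have h := hζ.geom_sum_eq_zero hp.out.one_lt
      rw [range_eq_Ico, sum_eq_sum_Ico_succ_bot hp.out.pos, pow_zero] at h
      linear_combination h
    rw [GoneEval_of_pow_eq_one hw hζ.pow_eq_one, hS, natCast_pred_eq_zero hodd]
    ring
end
end
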